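/- arXiv:1012.2557 — 2 statements merged into one kernel-verified Lean document; each statement's English description precedes it below -/
import Mathlib

section
/- The permutation δ = (13 14)(15 18)(16 20)(17 21)(19 22)(23 24)(4 11)(5 9)(6 3)(7 12)(8 10)(1 2) of {1,…,24} is an involution and commutes with κ = (1 15)(2 18)(3 13)(4 24)(5 17)(6 14)(7 20)(8 19)(9 21)(10 22)(11 23)(12 16): κδ = δκ. -/
def delta : Equiv.Perm ℕ :=
  (Equiv.swap 13 14) * (Equiv.swap 15 18) * (Equiv.swap 16 20) * (Equiv.swap 17 21) *
  (Equiv.swap 19 22) * (Equiv.swap 23 24) * (Equiv.swap 4 11) * (Equiv.swap 5 9) *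
  (Equiv.swap 6 3) * (Equiv.swap 7 12) * (Equiv.swap 8 10) * (Equiv.swap 1 2)

def kappa : Equiv.Perm ℕ :=
  (Equiv.swap 1 15) * (Equiv.swap 2 18) * (Equiv.swap 3 13) * (Equiv.swap 4 24) *
  (Equiv.swap 5 17) * (Equiv.swap 6 14) * (Equiv.swap 7 20) * (Equiv.swap 8 19) *
  (Equiv.swap 9 21) * (Equiv.swap 10 22) * (Equiv.swap 11 23) * (Equiv.swap 12 16)

lemma delta_fix (n : ℕ) (h : 25 ≤ n) : delta n = n := by
  simp only [delta, Equiv.Perm.mul_apply]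
  rw [show Equiv.swap 1 2 n = n from Equiv.swap_apply_of_ne_of_ne (by omega) (by omega)]
  rw [show Equiv.swap 8 10 n = n from Equiv.swap_apply_of_ne_of_ne (by omega) (by omega)]
  rw [show Equiv.swap 7 12 n = n from Equiv.swap_apply_of_ne_of_ne (by omega) (by omega)]
  rw [show Equiv.swap 6 3 n = n from Equiv.swap_apply_of_ne_of_ne (by omega) (by omega)]
  rw [show Equiv.swap 5 9 n = n from Equiv.swap_apply_of_ne_of_ne (by omega) (by omega)]
  rw [show Equiv.swap 4 11 n = n from Equiv.swap_apply_of_ne_of_ne (by omega) (by omega)]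
  rw [show Equiv.swap 23 24 n = n from Equiv.swap_apply_of_ne_of_ne (by omega) (by omega)]
  rw [show Equiv.swap 19 22 n = n from Equiv.swap_apply_of_ne_of_ne (by omega) (by omega)]
  rw [show Equiv.swap 17 21 n = n from Equiv.swap_apply_of_ne_of_ne (by omega) (by omega)]
  rw [show Equiv.swap 16 20 n = n from Equiv.swap_apply_of_ne_of_ne (by omega) (by omega)]
  rw [show Equiv.swap 15 18 n = n from Equiv.swap_apply_of_ne_of_ne (by omega) (by omega)]
  rw [show Equiv.swap 13 14 n = n from Equiv.swap_apply_of_ne_of_ne (by omega) (by omega)]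

lemma kappa_fix (n : ℕ) (h : 25 ≤ n) : kappa n = n := by
  simp only [kappa, Equiv.Perm.mul_apply]
  rw [show Equiv.swap 12 16 n = n from Equiv.swap_apply_of_ne_of_ne (by omega) (by omega)]
  rw [show Equiv.swap 11 23 n = n from Equiv.swap_apply_of_ne_of_ne (by omega) (by omega)]
  rw [show Equiv.swap 10 22 n = n from Equiv.swap_apply_of_ne_of_ne (by omega) (by omega)]
  rw [show Equiv.swap 9 21 n = n from Equiv.swap_apply_of_ne_of_ne (by omega) (by omega)]
  rw [show Equiv.swap 8 19 n = n from Equiv.swap_apply_of_ne_of_ne (by omega) (by omega)]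
  rw [show Equiv.swap 7 20 n = n from Equiv.swap_apply_of_ne_of_ne (by omega) (by omega)]
  rw [show Equiv.swap 6 14 n = n from Equiv.swap_apply_of_ne_of_ne (by omega) (by omega)]
  rw [show Equiv.swap 5 17 n = n from Equiv.swap_apply_of_ne_of_ne (by omega) (by omega)]
  rw [show Equiv.swap 4 24 n = n from Equiv.swap_apply_of_ne_of_ne (by omega) (by omega)]
  rw [show Equiv.swap 3 13 n = n from Equiv.swap_apply_of_ne_of_ne (by omega) (by omega)]
  rw [show Equiv.swap 2 18 n = n from Equiv.swap_apply_of_ne_of_ne (by omega) (by omega)]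
  rw [show Equiv.swap 1 15 n = n from Equiv.swap_apply_of_ne_of_ne (by omega) (by omega)]

theorem delta_involution_commutes_with_kappa :
    delta * delta = 1 ∧ kappa * delta = delta * kappa := by
  constructor <;> ext n <;> rcases lt_or_ge n 25 with h|h
  · interval_cases n <;> rfl
  · simp [Equiv.Perm.mul_apply, delta_fix n h]
  · interval_cases n <;> rfl
  · simp [Equiv.Perm.mul_apply, delta_fix n h, kappa_fix n h, delta_fix _ h, kappa_fix _ h]
end

section
/- Every nonzero codeword in the 𝔽₂-span of the rows of the 12×24 matrix G from the paper has Hamming weight at least 8, and the weights are all divisible by 4. -/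
def G : Matrix (Fin 12) (Fin 24) (ZMod 2) :=
  !![1, 0, 1, 0, 0, 0, 0, 1, 0, 0, 1, 0, 0, 1, 1, 0, 0, 0, 1, 0, 0, 0, 0, 1;
    0, 1, 0, 1, 0, 1, 0, 0, 0, 1, 0, 0, 1, 0, 0, 0, 0, 1, 0, 0, 0, 1, 1, 0;
    0, 0, 1, 0, 0, 0, 1, 0, 1, 0, 1, 0, 1, 0, 0, 1, 1, 0, 0, 0, 0, 0, 1, 0;
    0, 0, 0, 1, 1, 1, 0, 0, 0, 0, 0, 1, 0, 1, 0, 0, 0, 0, 0, 1, 1, 0, 0, 1;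
    0, 1, 0, 0, 1, 0, 0, 0, 0, 1, 0, 1, 0, 0, 1, 1, 1, 0, 1, 0, 0, 0, 0, 0;
    1, 0, 1, 0, 0, 0, 1, 1, 1, 0, 1, 0, 0, 1, 0, 1, 1, 1, 0, 0, 0, 1, 0, 1;
    0, 0, 1, 0, 1, 1, 0, 0, 1, 0, 0, 0, 1, 1, 0, 1, 0, 0, 0, 1, 0, 0, 0, 0;
    1, 1, 1, 0, 0, 1, 0, 0, 0, 0, 0, 0, 0, 0, 1, 0, 0, 1, 0, 0, 0, 0, 1, 1;
    0, 0, 0, 0, 0, 0, 1, 1, 0, 1, 0, 1, 0, 0, 1, 1, 0, 1, 0, 1, 0, 0, 0, 0;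
    1, 1, 0, 0, 1, 0, 0, 0, 1, 0, 0, 0, 0, 0, 0, 0, 1, 0, 1, 0, 1, 1, 0, 0;
    0, 0, 0, 1, 0, 0, 0, 1, 0, 1, 1, 0, 1, 1, 0, 0, 0, 0, 1, 0, 0, 1, 0, 0;
    0, 1, 0, 1, 1, 1, 0, 0, 0, 1, 0, 1, 1, 0, 1, 0, 0, 0, 1, 1, 1, 0, 1, 0]

/-!
Encode a binary word of length `k` as the natural number whose `j`-th bit is its `j`-th
coordinate. Addition of words becomes `xor`, the Hamming weight becomes the number of set bits,
and the `2 ^ 12` codewords `∑ i, c i • G i` become `xor`s of twelve fixed numbers, cheap enough for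
the kernel to enumerate and check one by one.
-/

open Finset

def ofBits {k : ℕ} (n : ℕ) : Fin k → ZMod 2 := fun j => if n.testBit j then 1 else 0

def popcount (k n : ℕ) : ℕ := #{j : Fin k | n.testBit j}

def xorComb {m : ℕ} (r : Fin m → ℕ) (c : Fin m → ZMod 2) : ℕ :=
  Fin.foldr m (fun i acc => if c i = 1 then r i ^^^ acc else acc) 0

section ofBits

variable {k : ℕ}

@[simp]
lemma ofBits_zero : (ofBits 0 : Fin k → ZMod 2) = 0 := by
  ext j
  simp [ofBits]

lemma ofBits_xor (a b : ℕ) : (ofBits (a ^^^ b) : Fin k → ZMod 2) = ofBits a + ofBits b := by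
  ext j
  simp only [ofBits, Nat.testBit_xor, Pi.add_apply]
  cases a.testBit j <;> cases b.testBit j <;> decide

lemma hammingNorm_ofBits (n : ℕ) : hammingNorm (ofBits n : Fin k → ZMod 2) = popcount k n := by
  simp only [hammingNorm, popcount, ofBits]
  congr 1
  ext j
  cases n.testBit j <;> simp

lemma smul_ofBits (a : ZMod 2) (n : ℕ) :
    a • (ofBits n : Fin k → ZMod 2) = ofBits (if a = 1 then n else 0) := by
  obtain rfl | rfl : a = 0 ∨ a = 1 := by revert a; decide
  · simp
  · simp

lemma sum_smul_ofBits {m : ℕ} (r : Fin m → ℕ) (c : Fin m → ZMod 2) :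
    ∑ i, c i • (ofBits (r i) : Fin k → ZMod 2) = ofBits (xorComb r c) := by
  induction m with
  | zero => simp [xorComb]
  | succ m ih =>
    rw [Fin.sum_univ_succ, ih, smul_ofBits, ← ofBits_xor]
    simp only [xorComb, Fin.foldr_succ]
    split_ifs <;> simp

end ofBits

def rowBits : Fin 12 → ℕ :=
  ![8676485, 6427178, 4298052, 9971768, 379410, 10724805, 569652, 12730407, 707264, 3473683,
    2373256, 6052410]

lemma G_row_eq_ofBits (i : Fin 12) : G i = ofBits (rowBits i) :=
  congrFun (show G = Matrix.of fun i => ofBits (rowBits i) by decide) i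

set_option maxRecDepth 100000 in
lemma popcount_xorComb_rowBits :
    ∀ c : Fin 12 → ZMod 2, popcount 24 (xorComb rowBits c) ≠ 0 →
      8 ≤ popcount 24 (xorComb rowBits c) ∧ 4 ∣ popcount 24 (xorComb rowBits c) := by
  decide +kernel

theorem code_min_weight_eight_doubly_even :
    ∀ v ∈ Submodule.span (ZMod 2) (Set.range fun i : Fin 12 => G i),
      v ≠ 0 → 8 ≤ hammingNorm v ∧ 4 ∣ hammingNorm v := by
  intro v hv
  obtain ⟨c, rfl⟩ := (Submodule.mem_span_range_iff_exists_fun (ZMod 2)).mp hv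
  simp only [← hammingNorm_ne_zero_iff, G_row_eq_ofBits, sum_smul_ofBits, hammingNorm_ofBits]
  exact popcount_xorComb_rowBits c
end
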